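/- For the mixture family with τ > 0 whose components satisfy the independence condition: for every z ∈ ℝ^K \ {0} and all θ₁, θ₂ ∈ Θ_τ with |θ₁ − θ₂| ≤ τ/(2√K), (z^T J(θ₁) z)/(z^T J(θ₂) z) ≤ 1 + (2e√K/τ)·|θ₁ − θ₂|. Consequently the mixture family satisfies the local Fisher-information ratio condition (A5) with b̄ = τ/(2√K) and κ = 2e√K/τ. -/

import Mathlib

open MeasureTheory Matrix

noncomputable section

/-- Euclidean norm on `Fin K → ℝ`. -/
def euclNorm {K : ℕ} (v : Fin K → ℝ) : ℝ := Real.sqrt (∑ i, (v i) ^ 2)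

/-- The mixture density `p_θ = θ₀ q₀ + Σ_{i=1}^K θᵢ qᵢ`, where `θ₀ = 1 − Σᵢ θᵢ`. -/
def mixP {K : ℕ} {X : Type*} (q : Fin (K + 1) → X → ℝ) (θ : Fin K → ℝ) (x : X) : ℝ :=
  (1 - ∑ i, θ i) * q 0 x + ∑ i : Fin K, θ i * q i.succ x

/-- The restricted parameter set
`Θ_τ = {θ ∈ [0,1]^K : θᵢ ≥ τ for all i ∈ {0,…,K}}` (with `θ₀ = 1 − Σᵢ θᵢ`). -/
def ThetaTau (K : ℕ) (τ : ℝ) : Set (Fin K → ℝ) :=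
  {θ | (∀ i, 0 ≤ θ i ∧ θ i ≤ 1) ∧ (∀ i, τ ≤ θ i) ∧ τ ≤ 1 - ∑ i, θ i}

/-- Empirical Fisher information of the mixture family (one observation):
`Ĵ_{ij}(θ;x) = (qᵢ(x)−q₀(x))(q_j(x)−q₀(x))/p_θ(x)²`. -/
def mixJhat1 {K : ℕ} {X : Type*} (q : Fin (K + 1) → X → ℝ) (θ : Fin K → ℝ) (x : X) :
    Matrix (Fin K) (Fin K) ℝ :=
  Matrix.of fun i j => (q i.succ x - q 0 x) * (q j.succ x - q 0 x) / (mixP q θ x) ^ 2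

/-- Empirical Fisher information of the mixture family for a sample `x^n`. -/
def mixJhatN {K : ℕ} {X : Type*} (q : Fin (K + 1) → X → ℝ) {n : ℕ} (θ : Fin K → ℝ)
    (xn : Fin n → X) : Matrix (Fin K) (Fin K) ℝ :=
  (n : ℝ)⁻¹ • ∑ t, mixJhat1 q θ (xn t)

/-- Fisher information of the mixture family: `J(θ) = E_{p_θ}[Ĵ(θ;X)]`. -/
def mixJ {K : ℕ} {X : Type*} [MeasurableSpace X] (μ : Measure X)
    (q : Fin (K + 1) → X → ℝ) (θ : Fin K → ℝ) : Matrix (Fin K) (Fin K) ℝ :=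
  Matrix.of fun i j => ∫ x, mixP q θ x * mixJhat1 q θ x i j ∂μ

/-!
Write `p_θ = q₀ + θ ⬝ u` with `uᵢ = q_{i+1} − q₀` and `S = Σⱼ qⱼ`. On `Θ_τ` one has `τ S ≤ p_θ`,
while `|uᵢ| ≤ S`; hence by Cauchy–Schwarz
`|p_{θ₂} − p_{θ₁}| ≤ |θ₁ − θ₂| √K S ≤ (√K/τ)|θ₁ − θ₂| p_{θ₁}`.
Since `zᵀ J(θ) z = ∫ (z ⬝ u)² / p_θ dμ`, this pointwise comparison of the densities integrates to
`zᵀ J(θ₁) z ≤ (1 + (√K/τ)|θ₁ − θ₂|) zᵀ J(θ₂) z`, which is stronger than the claim because `1 ≤ 2e`.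
-/

section EuclNorm

variable {K : ℕ}

lemma euclNorm_nonneg (v : Fin K → ℝ) : 0 ≤ euclNorm v := Real.sqrt_nonneg _

lemma euclNorm_sub_comm (v w : Fin K → ℝ) : euclNorm (v - w) = euclNorm (w - v) := by
  simp only [euclNorm, Pi.sub_apply, sq, ← neg_sub (v _) (w _), neg_mul_neg]

lemma abs_dotProduct_le_euclNorm_mul (v w : Fin K → ℝ) : |v ⬝ᵥ w| ≤ euclNorm v * euclNorm w := by
  rw [euclNorm, euclNorm, ← Real.sqrt_mul (Finset.sum_nonneg fun i _ => sq_nonneg (v i))]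
  exact Real.abs_le_sqrt (Finset.sum_mul_sq_le_sq_mul_sq _ _ _)

lemma euclNorm_le_sqrt_mul_of_abs_le {v : Fin K → ℝ} {c : ℝ} (hc : 0 ≤ c)
    (hv : ∀ i, |v i| ≤ c) : euclNorm v ≤ Real.sqrt K * c := by
  calc euclNorm v ≤ Real.sqrt (∑ _i : Fin K, c ^ 2) :=
        Real.sqrt_le_sqrt <| Finset.sum_le_sum fun i _ =>
          sq_le_sq' (abs_le.mp (hv i)).1 (abs_le.mp (hv i)).2
    _ = Real.sqrt K * c := by
        simp [Real.sqrt_mul (Nat.cast_nonneg K), Real.sqrt_sq hc]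

end EuclNorm

lemma dotProduct_of_mul_div_mulVec {n : Type*} [Fintype n] (u z : n → ℝ) (p : ℝ) :
    z ⬝ᵥ (of fun i j => u i * u j / p) *ᵥ z = (z ⬝ᵥ u) ^ 2 / p := by
  simp only [dotProduct, mulVec, of_apply]
  rw [sq, Finset.sum_mul_sum, Finset.sum_div]
  refine Finset.sum_congr rfl fun i _ => ?_
  rw [Finset.mul_sum, Finset.sum_div]
  exact Finset.sum_congr rfl fun j _ => by ring

lemma dotProduct_mulVec_of_integral {X n : Type*} [MeasurableSpace X] [Fintype n]
    {μ : Measure X} {f : X → n → n → ℝ} (hf : ∀ i j, Integrable (fun x => f x i j) μ) (z : n → ℝ) :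
    z ⬝ᵥ (of fun i j => ∫ x, f x i j ∂μ) *ᵥ z = ∫ x, z ⬝ᵥ of (f x) *ᵥ z ∂μ := by
  simp only [dotProduct, mulVec, of_apply]
  rw [integral_finsetSum _ fun i _ =>
    (integrable_finsetSum _ fun j _ => (hf i j).mul_const _).const_mul _]
  refine Finset.sum_congr rfl fun i _ => ?_
  rw [integral_const_mul, integral_finsetSum _ fun j _ => (hf i j).mul_const _]
  simp only [integral_mul_const]

section Mixture

variable {K : ℕ} {X : Type*}

def mixDiff (q : Fin (K + 1) → X → ℝ) (x : X) : Fin K → ℝ := fun i => q i.succ x - q 0 x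

section Pointwise

variable {q : Fin (K + 1) → X → ℝ} {τ : ℝ} {θ θ₁ θ₂ : Fin K → ℝ}

lemma mixP_eq_add_dotProduct (θ : Fin K → ℝ) (x : X) :
    mixP q θ x = q 0 x + θ ⬝ᵥ mixDiff q x := by
  simp only [mixP, mixDiff, dotProduct, mul_sub, Finset.sum_sub_distrib, ← Finset.sum_mul]
  ring

lemma mixP_sub_mixP (x : X) : mixP q θ₂ x - mixP q θ₁ x = (θ₂ - θ₁) ⬝ᵥ mixDiff q x := by
  rw [mixP_eq_add_dotProduct, mixP_eq_add_dotProduct, sub_dotProduct]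
  ring

lemma mul_sum_le_mixP (hq : ∀ i x, 0 ≤ q i x) (hθ : θ ∈ ThetaTau K τ) (x : X) :
    τ * ∑ j, q j x ≤ mixP q θ x := by
  obtain ⟨-, hθτ, hθ₀τ⟩ := hθ
  rw [Fin.sum_univ_succ, mul_add, Finset.mul_sum]
  exact add_le_add (mul_le_mul_of_nonneg_right hθ₀τ (hq 0 x))
    (Finset.sum_le_sum fun i _ => mul_le_mul_of_nonneg_right (hθτ i) (hq i.succ x))

lemma mixP_nonneg (hq : ∀ i x, 0 ≤ q i x) (hτ : 0 ≤ τ) (hθ : θ ∈ ThetaTau K τ) (x : X) :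
    0 ≤ mixP q θ x :=
  (mul_nonneg hτ (Finset.sum_nonneg fun j _ => hq j x)).trans (mul_sum_le_mixP hq hθ x)

lemma abs_mixDiff_le (hq : ∀ i x, 0 ≤ q i x) (x : X) (i : Fin K) :
    |mixDiff q x i| ≤ ∑ j, q j x := by
  have hle : ∀ j, q j x ≤ ∑ j, q j x := fun j =>
    Finset.single_le_sum (fun j _ => hq j x) (Finset.mem_univ j)
  rw [mixDiff, abs_sub_le_iff]
  constructor <;> linarith [hle 0, hle i.succ, hq 0 x, hq i.succ x]

lemma euclNorm_mixDiff_le (hq : ∀ i x, 0 ≤ q i x) (x : X) :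
    euclNorm (mixDiff q x) ≤ Real.sqrt K * ∑ j, q j x :=
  euclNorm_le_sqrt_mul_of_abs_le (Finset.sum_nonneg fun j _ => hq j x) (abs_mixDiff_le hq x)

lemma sq_dotProduct_mixDiff_le (hq : ∀ i x, 0 ≤ q i x) (z : Fin K → ℝ) (x : X) :
    (z ⬝ᵥ mixDiff q x) ^ 2 ≤ (euclNorm z * Real.sqrt K) ^ 2 * (∑ j, q j x) ^ 2 := by
  rw [← mul_pow, ← sq_abs, mul_assoc]
  exact pow_le_pow_left₀ (abs_nonneg _) ((abs_dotProduct_le_euclNorm_mul z _).trans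
    (mul_le_mul_of_nonneg_left (euclNorm_mixDiff_le hq x) (Real.sqrt_nonneg _))) 2

lemma mixP_le_mul_mixP (hq : ∀ i x, 0 ≤ q i x) (hτ : 0 < τ) (hθ₁ : θ₁ ∈ ThetaTau K τ) (x : X) :
    mixP q θ₂ x ≤ (1 + Real.sqrt K / τ * euclNorm (θ₁ - θ₂)) * mixP q θ₁ x := by
  have hdiff : mixP q θ₂ x - mixP q θ₁ x ≤ euclNorm (θ₁ - θ₂) * (Real.sqrt K * ∑ j, q j x) := by
    rw [mixP_sub_mixP, euclNorm_sub_comm]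
    exact (le_abs_self _).trans <| (abs_dotProduct_le_euclNorm_mul _ _).trans <|
      mul_le_mul_of_nonneg_left (euclNorm_mixDiff_le hq x) (Real.sqrt_nonneg _)
  calc mixP q θ₂ x = mixP q θ₁ x + (mixP q θ₂ x - mixP q θ₁ x) := by ring
    _ ≤ mixP q θ₁ x + Real.sqrt K / τ * euclNorm (θ₁ - θ₂) * (τ * ∑ j, q j x) := by
        rw [show Real.sqrt K / τ * euclNorm (θ₁ - θ₂) * (τ * ∑ j, q j x)
          = euclNorm (θ₁ - θ₂) * (Real.sqrt K * ∑ j, q j x) by field_simp]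
        gcongr
    _ ≤ mixP q θ₁ x + Real.sqrt K / τ * euclNorm (θ₁ - θ₂) * mixP q θ₁ x := by
        have := euclNorm_nonneg (θ₁ - θ₂)
        gcongr
        exact mul_sum_le_mixP hq hθ₁ x
    _ = (1 + Real.sqrt K / τ * euclNorm (θ₁ - θ₂)) * mixP q θ₁ x := by ring

lemma abs_div_mixP_le (hq : ∀ i x, 0 ≤ q i x) (hτ : 0 < τ) (hθ : θ ∈ ThetaTau K τ)
    {f : X → ℝ} {C : ℝ} (hf : ∀ x, |f x| ≤ C * (∑ j, q j x) ^ 2) (x : X) :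
    |f x / mixP q θ x| ≤ C / τ * ∑ j, q j x := by
  rcases (Finset.sum_nonneg fun j _ => hq j x : 0 ≤ ∑ j, q j x).eq_or_lt with hS | hS
  · have hf0 : f x = 0 := abs_nonpos_iff.mp (by simpa [← hS] using hf x)
    rw [hf0, zero_div, abs_zero, ← hS, mul_zero]
  · have hp : τ * ∑ j, q j x ≤ mixP q θ x := mul_sum_le_mixP hq hθ x
    have hp0 : 0 < mixP q θ x := (mul_pos hτ hS).trans_le hp
    have hC : 0 ≤ C * (∑ j, q j x) ^ 2 := (abs_nonneg _).trans (hf x)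
    calc |f x / mixP q θ x| = |f x| / mixP q θ x := by rw [abs_div, abs_of_pos hp0]
      _ ≤ C * (∑ j, q j x) ^ 2 / (τ * ∑ j, q j x) := div_le_div₀ hC (hf x) (mul_pos hτ hS) hp
      _ = C / τ * ∑ j, q j x := by field_simp

lemma mixP_mul_mixJhat1_apply (x : X) (i j : Fin K) :
    mixP q θ x * mixJhat1 q θ x i j = mixDiff q x i * mixDiff q x j / mixP q θ x := by
  rw [mixJhat1, of_apply, mixDiff, mixDiff]
  rcases eq_or_ne (mixP q θ x) 0 with h | h
  · simp [h]
  · field_simp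

lemma div_mixP_le_mul_div_mixP (hq : ∀ i x, 0 ≤ q i x) (hτ : 0 < τ)
    (hθ₁ : θ₁ ∈ ThetaTau K τ) (hθ₂ : θ₂ ∈ ThetaTau K τ) {a : ℝ} (ha : 0 ≤ a) (x : X) :
    a / mixP q θ₁ x ≤ (1 + Real.sqrt K / τ * euclNorm (θ₁ - θ₂)) * (a / mixP q θ₂ x) := by
  have hc : 0 ≤ 1 + Real.sqrt K / τ * euclNorm (θ₁ - θ₂) := by
    have := euclNorm_nonneg (θ₁ - θ₂)
    positivity
  rcases (mixP_nonneg hq hτ.le hθ₁ x).eq_or_lt with hp₁ | hp₁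
  · rw [← hp₁, div_zero]
    exact mul_nonneg hc (div_nonneg ha (mixP_nonneg hq hτ.le hθ₂ x))
  · have hp₂ : 0 < mixP q θ₂ x := by
      have := euclNorm_nonneg (θ₂ - θ₁)
      exact pos_of_mul_pos_right (hp₁.trans_le (mixP_le_mul_mixP hq hτ hθ₂ x)) (by positivity)
    rw [mul_div_assoc', div_le_div_iff₀ hp₁ hp₂]
    calc a * mixP q θ₂ x
        ≤ a * ((1 + Real.sqrt K / τ * euclNorm (θ₁ - θ₂)) * mixP q θ₁ x) :=
          mul_le_mul_of_nonneg_left (mixP_le_mul_mixP hq hτ hθ₁ x) ha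
      _ = (1 + Real.sqrt K / τ * euclNorm (θ₁ - θ₂)) * a * mixP q θ₁ x := by ring

end Pointwise

section Integral

variable [MeasurableSpace X] {μ : Measure X} {q : Fin (K + 1) → X → ℝ} {τ : ℝ}
  {θ θ₁ θ₂ : Fin K → ℝ}

lemma integrable_mixP (hq_int : ∀ i, Integrable (q i) μ) (θ : Fin K → ℝ) :
    Integrable (mixP q θ) μ :=
  ((hq_int 0).const_mul _).add (integrable_finsetSum _ fun i _ => (hq_int i.succ).const_mul _)

lemma aestronglyMeasurable_mixDiff (hq_int : ∀ i, Integrable (q i) μ) (i : Fin K) :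
    AEStronglyMeasurable (fun x => mixDiff q x i) μ :=
  ((hq_int i.succ).sub (hq_int 0)).aestronglyMeasurable

lemma integrable_div_mixP (hq : ∀ i x, 0 ≤ q i x) (hq_int : ∀ i, Integrable (q i) μ)
    (hτ : 0 < τ) (hθ : θ ∈ ThetaTau K τ) {f : X → ℝ} (hf_meas : AEStronglyMeasurable f μ)
    {C : ℝ} (hf : ∀ x, |f x| ≤ C * (∑ j, q j x) ^ 2) :
    Integrable (fun x => f x / mixP q θ x) μ :=
  ((integrable_finsetSum _ fun j _ => hq_int j).const_mul (C / τ)).mono'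
    (hf_meas.aemeasurable.div (integrable_mixP hq_int θ).aemeasurable).aestronglyMeasurable
    (ae_of_all _ (abs_div_mixP_le hq hτ hθ hf))

lemma integrable_sq_dotProduct_div_mixP (hq : ∀ i x, 0 ≤ q i x)
    (hq_int : ∀ i, Integrable (q i) μ) (hτ : 0 < τ) (hθ : θ ∈ ThetaTau K τ) (z : Fin K → ℝ) :
    Integrable (fun x => (z ⬝ᵥ mixDiff q x) ^ 2 / mixP q θ x) μ := by
  refine integrable_div_mixP hq hq_int hτ hθ ?_ (C := (euclNorm z * Real.sqrt K) ^ 2) fun x => ?_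
  · simp only [dotProduct]
    exact (Finset.aestronglyMeasurable_fun_sum _ fun i _ =>
      (aestronglyMeasurable_mixDiff hq_int i).const_mul _).pow 2
  · rw [abs_of_nonneg (sq_nonneg _)]
    exact sq_dotProduct_mixDiff_le hq z x

lemma dotProduct_mixJ_mulVec (hq : ∀ i x, 0 ≤ q i x) (hq_int : ∀ i, Integrable (q i) μ)
    (hτ : 0 < τ) (hθ : θ ∈ ThetaTau K τ) (z : Fin K → ℝ) :
    z ⬝ᵥ mixJ μ q θ *ᵥ z = ∫ x, (z ⬝ᵥ mixDiff q x) ^ 2 / mixP q θ x ∂μ := by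
  simp only [mixJ, mixP_mul_mixJhat1_apply]
  refine (dotProduct_mulVec_of_integral
    (f := fun x i j => mixDiff q x i * mixDiff q x j / mixP q θ x) (fun i j => ?_) z).trans ?_
  · refine integrable_div_mixP hq hq_int hτ hθ
      ((aestronglyMeasurable_mixDiff hq_int i).mul (aestronglyMeasurable_mixDiff hq_int j))
      (C := 1) fun x => ?_
    rw [one_mul, sq, abs_mul]
    exact mul_le_mul (abs_mixDiff_le hq x i) (abs_mixDiff_le hq x j) (abs_nonneg _)
      (Finset.sum_nonneg fun j _ => hq j x)
  · simp only [dotProduct_of_mul_div_mulVec]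

lemma dotProduct_mixJ_mulVec_nonneg (hq : ∀ i x, 0 ≤ q i x)
    (hq_int : ∀ i, Integrable (q i) μ) (hτ : 0 < τ) (hθ : θ ∈ ThetaTau K τ) (z : Fin K → ℝ) :
    0 ≤ z ⬝ᵥ mixJ μ q θ *ᵥ z := by
  rw [dotProduct_mixJ_mulVec hq hq_int hτ hθ]
  exact integral_nonneg fun x => div_nonneg (sq_nonneg _) (mixP_nonneg hq hτ.le hθ x)

lemma dotProduct_mixJ_mulVec_le_mul (hq : ∀ i x, 0 ≤ q i x)
    (hq_int : ∀ i, Integrable (q i) μ) (hτ : 0 < τ) (hθ₁ : θ₁ ∈ ThetaTau K τ)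
    (hθ₂ : θ₂ ∈ ThetaTau K τ) (z : Fin K → ℝ) :
    z ⬝ᵥ mixJ μ q θ₁ *ᵥ z
      ≤ (1 + Real.sqrt K / τ * euclNorm (θ₁ - θ₂)) * z ⬝ᵥ mixJ μ q θ₂ *ᵥ z := by
  rw [dotProduct_mixJ_mulVec hq hq_int hτ hθ₁, dotProduct_mixJ_mulVec hq hq_int hτ hθ₂,
    ← integral_const_mul]
  exact integral_mono (integrable_sq_dotProduct_div_mixP hq hq_int hτ hθ₁ z)
    ((integrable_sq_dotProduct_div_mixP hq hq_int hτ hθ₂ z).const_mul _)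
    fun x => div_mixP_le_mul_div_mixP hq hτ hθ₁ hθ₂ (sq_nonneg _) x

end Integral

end Mixture

theorem stmt15_general {K : ℕ} {X : Type*} [MeasurableSpace X] (μ : Measure X)
    (q : Fin (K + 1) → X → ℝ)
    (hq_nonneg : ∀ i x, 0 ≤ q i x) (hq_prob : ∀ i, ∫ x, q i x ∂μ = 1)
    (τ : ℝ) (hτ : 0 < τ) :
    ∀ z : Fin K → ℝ, z ≠ 0 →
      ∀ θ₁ ∈ ThetaTau K τ, ∀ θ₂ ∈ ThetaTau K τ,
        euclNorm (θ₁ - θ₂) ≤ τ / (2 * Real.sqrt K) →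
          (z ⬝ᵥ (mixJ μ q θ₁).mulVec z) / (z ⬝ᵥ (mixJ μ q θ₂).mulVec z)
            ≤ 1 + (2 * Real.exp 1 * Real.sqrt K / τ) * euclNorm (θ₁ - θ₂) ∧
          z ⬝ᵥ (mixJ μ q θ₁).mulVec z
            ≤ (1 + (2 * Real.exp 1 * Real.sqrt K / τ) * euclNorm (θ₁ - θ₂)) *
              (z ⬝ᵥ (mixJ μ q θ₂).mulVec z) := by
  intro z _ θ₁ hθ₁ θ₂ hθ₂ _
  have hq_int : ∀ i, Integrable (q i) μ := fun i =>
    .of_integral_ne_zero (by rw [hq_prob i]; exact one_ne_zero)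
  have hκ : Real.sqrt K / τ ≤ 2 * Real.exp 1 * Real.sqrt K / τ := by
    have : (1 : ℝ) ≤ 2 * Real.exp 1 := by linarith [Real.add_one_le_exp 1]
    gcongr
    exact le_mul_of_one_le_left (Real.sqrt_nonneg _) this
  have hQ₂ := dotProduct_mixJ_mulVec_nonneg hq_nonneg hq_int hτ hθ₂ z
  have hd := euclNorm_nonneg (θ₁ - θ₂)
  have hle : z ⬝ᵥ mixJ μ q θ₁ *ᵥ z
      ≤ (1 + 2 * Real.exp 1 * Real.sqrt K / τ * euclNorm (θ₁ - θ₂)) * z ⬝ᵥ mixJ μ q θ₂ *ᵥ z := by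
    refine (dotProduct_mixJ_mulVec_le_mul hq_nonneg hq_int hτ hθ₁ hθ₂ z).trans ?_
    gcongr
  have hc : 0 ≤ 1 + 2 * Real.exp 1 * Real.sqrt K / τ * euclNorm (θ₁ - θ₂) := by positivity
  exact ⟨div_le_of_le_mul₀ hQ₂ hc hle, hle⟩

/-- **Lemma 8.** For the mixture family with `τ > 0` whose components satisfy the
independence condition: for every `z ≠ 0` and all `θ₁, θ₂ ∈ Θ_τ` with
`|θ₁ − θ₂| ≤ τ/(2√K)`,
`(zᵀJ(θ₁)z)/(zᵀJ(θ₂)z) ≤ 1 + (2e√K/τ)|θ₁−θ₂|`.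
Consequently the mixture family satisfies the local Fisher-information ratio
condition (A5) with `b̄ = τ/(2√K)` and `κ = 2e√K/τ`. -/
theorem stmt15 {K : ℕ} {X : Type*} [MeasurableSpace X] (μ : Measure X) [SigmaFinite μ]
    (q : Fin (K + 1) → X → ℝ) (hq_meas : ∀ i, Measurable (q i))
    (hq_nonneg : ∀ i x, 0 ≤ q i x) (hq_prob : ∀ i, ∫ x, q i x ∂μ = 1)
    (τ : ℝ) (hτ : 0 < τ) (hτ' : τ ≤ 1 / (K + 1))
    (hindep : ∀ i : Fin (K + 1),
      0 < sInf {d : ℝ | ∃ w : Fin (K + 1) → ℝ, (∀ j, 0 ≤ w j) ∧ w i = 0 ∧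
        (∑ j, w j) = 1 ∧
        d = ∫ x, q i x * Real.log (q i x / ∑ j, w j * q j x) ∂μ}) :
    ∀ z : Fin K → ℝ, z ≠ 0 →
      ∀ θ₁ ∈ ThetaTau K τ, ∀ θ₂ ∈ ThetaTau K τ,
        euclNorm (θ₁ - θ₂) ≤ τ / (2 * Real.sqrt K) →
          (z ⬝ᵥ (mixJ μ q θ₁).mulVec z) / (z ⬝ᵥ (mixJ μ q θ₂).mulVec z)
            ≤ 1 + (2 * Real.exp 1 * Real.sqrt K / τ) * euclNorm (θ₁ - θ₂) ∧
          z ⬝ᵥ (mixJ μ q θ₁).mulVec z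
            ≤ (1 + (2 * Real.exp 1 * Real.sqrt K / τ) * euclNorm (θ₁ - θ₂)) *
              (z ⬝ᵥ (mixJ μ q θ₂).mulVec z) :=
  stmt15_general μ q hq_nonneg hq_prob τ hτ
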